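/- arXiv:math/0605396 — 2 statements merged into one kernel-verified Lean document; each statement's English description precedes it below -/
import Mathlib

section
/- Let (Y, d) be a metric space, c: ℝ → Y an isometric embedding, and b > 0 such that for every x ∈ Y and every y ∈ π_c(x), the set π_c(B(x, d(x, y))) has diameter at most b (where π_c denotes nonempty closest-point projection to c(ℝ)). Let c': ℝ → Y be another isometric embedding with the same property for the constant b. Suppose O = c(0), O' = c'(0), π_{c'}(c(ℝ)) ⊆ B(O', R + 4b) and π_c(c'(ℝ)) ⊆ B(O, R + 4b) for some R > 0. Then the sets Π(c, R + 6b) = {x ∈ Y : π_c(x) ⊆ c([R + 6b, ∞))} and Π(c', R + 6b) = {x ∈ Y : π_{c'}(x) ⊆ c'([R + 6b, ∞))} are disjoint. -/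
open Set Metric

/-- The closest-point projection of `x` to the image of `c`. -/
def proj {Y : Type*} [MetricSpace Y] (c : ℝ → Y) (x : Y) : Set Y :=
  {y ∈ Set.range c | ∀ z ∈ Set.range c, dist x y ≤ dist x z}

/-- The projection of a subset to the image of `c`. -/
def projSet {Y : Type*} [MetricSpace Y] (c : ℝ → Y) (A : Set Y) : Set Y :=
  ⋃ x ∈ A, proj c x

/-!
Proof idea: let `x` lie in both sets, with closest points `y` on `c` and `z` on `c'`, and say
`d(x, y) ≤ d(x, z)`. A closest point `w` of `y` on `c'` lies in `π_{c'}(B(x, d(x, z)))`, as does `z`,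
so `d(z, w) ≤ b` by the contraction property. But `w ∈ π_{c'}(c(ℝ))` is within `R + 4b` of `O'`,
while `z` is at least `R + 6b` away from `O'`.
-/

section Projection

variable {Y : Type*} [MetricSpace Y] {c : ℝ → Y}

theorem Bornology.IsBounded.projSet {A : Set Y} (hA : Bornology.IsBounded A) :
    Bornology.IsBounded (projSet c A) := by
  obtain ⟨r, hAr⟩ := hA.subset_closedBall (c 0)
  refine (isBounded_closedBall (x := c 0) (r := 2 * r)).subset fun v hv => ?_
  obtain ⟨u, hu, hv⟩ := mem_iUnion₂.mp hv
  have huv : dist u v ≤ dist u (c 0) := hv.2 (c 0) (mem_range_self 0)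
  have hur : dist u (c 0) ≤ r := hAr hu
  rw [mem_closedBall]
  linarith [dist_triangle v u (c 0), dist_comm u v]

theorem dist_le_of_mem_proj_of_dist_le {b : ℝ}
    (hcontr : ∀ x : Y, ∀ y ∈ proj c x, diam (projSet c (closedBall x (dist x y))) ≤ b)
    {x y z w : Y} (hz : z ∈ proj c x) (hxy : dist x y ≤ dist x z) (hw : w ∈ proj c y) :
    dist z w ≤ b := by
  have hzS : z ∈ projSet c (closedBall x (dist x z)) :=
    mem_biUnion (mem_closedBall_self dist_nonneg) hz
  have hwS : w ∈ projSet c (closedBall x (dist x z)) :=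
    mem_biUnion (mem_closedBall'.mpr hxy) hw
  exact (dist_le_diam_of_mem isBounded_closedBall.projSet hzS hwS).trans (hcontr x z hz)

theorem Isometry.le_dist_apply_zero_of_mem_image_Ici (hc : Isometry c) {s : ℝ} {z : Y}
    (hz : z ∈ c '' Ici s) : s ≤ dist z (c 0) := by
  obtain ⟨t, ht, rfl⟩ := hz
  rw [hc.dist_eq, Real.dist_eq, sub_zero]
  exact (mem_Ici.mp ht).trans (le_abs_self t)

theorem dist_lt_of_proj_subset_image_Ici (hc : Isometry c) (hne : ∀ x : Y, (proj c x).Nonempty)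
    {b R : ℝ} (hb : 0 < b)
    (hcontr : ∀ x : Y, ∀ y ∈ proj c x, diam (projSet c (closedBall x (dist x y))) ≤ b)
    {S : Set Y} (hS : projSet c S ⊆ closedBall (c 0) (R + 4 * b))
    {x z y : Y} (hx : proj c x ⊆ c '' Ici (R + 6 * b)) (hz : z ∈ proj c x) (hy : y ∈ S) :
    dist x z < dist x y := by
  by_contra! hyz
  obtain ⟨w, hw⟩ := hne y
  have hzw : dist z w ≤ b := dist_le_of_mem_proj_of_dist_le hcontr hz hyz hw
  have hw_near : dist w (c 0) ≤ R + 4 * b := hS (mem_biUnion hy hw)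
  have hz_far : R + 6 * b ≤ dist z (c 0) := hc.le_dist_apply_zero_of_mem_image_Ici (hx hz)
  linarith [dist_triangle z w (c 0)]

end Projection

theorem pingpong_sets_disjoint_general {Y : Type*} [MetricSpace Y]
    (c c' : ℝ → Y) (hc : Isometry c) (hc' : Isometry c')
    (hne : ∀ x : Y, (proj c x).Nonempty) (hne' : ∀ x : Y, (proj c' x).Nonempty)
    (b : ℝ) (hb : 0 < b)
    (hcontr : ∀ x : Y, ∀ y ∈ proj c x,
      Metric.diam (projSet c (closedBall x (dist x y))) ≤ b)
    (hcontr' : ∀ x : Y, ∀ y ∈ proj c' x,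
      Metric.diam (projSet c' (closedBall x (dist x y))) ≤ b)
    (R : ℝ)
    (hbd : projSet c' (Set.range c) ⊆ closedBall (c' 0) (R + 4 * b))
    (hbd' : projSet c (Set.range c') ⊆ closedBall (c 0) (R + 4 * b)) :
    Disjoint {x : Y | proj c x ⊆ c '' Ici (R + 6 * b)}
      {x : Y | proj c' x ⊆ c' '' Ici (R + 6 * b)} := by
  refine disjoint_left.mpr fun x hx hx' => ?_
  obtain ⟨y, hy⟩ := hne x
  obtain ⟨z, hz⟩ := hne' x
  exact lt_asymm
    (dist_lt_of_proj_subset_image_Ici hc' hne' hb hcontr' hbd hx' hz hy.1)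
    (dist_lt_of_proj_subset_image_Ici hc hne hb hcontr hbd' hx hy hz.1)

/-- Abstract Corollary 5.6: under the contraction property for projections to two geodesic
lines `c`, `c'` and the bounded-projection property between them, the ping-pong sets
`Π(c, R+6b)` and `Π(c', R+6b)` are disjoint. -/
theorem pingpong_sets_disjoint {Y : Type*} [MetricSpace Y]
    (c c' : ℝ → Y) (hc : Isometry c) (hc' : Isometry c')
    (hne : ∀ x : Y, (proj c x).Nonempty) (hne' : ∀ x : Y, (proj c' x).Nonempty)
    (b : ℝ) (hb : 0 < b)
    (hcontr : ∀ x : Y, ∀ y ∈ proj c x,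
      Metric.diam (projSet c (closedBall x (dist x y))) ≤ b)
    (hcontr' : ∀ x : Y, ∀ y ∈ proj c' x,
      Metric.diam (projSet c' (closedBall x (dist x y))) ≤ b)
    (R : ℝ) (hR : 0 < R)
    (hbd : projSet c' (Set.range c) ⊆ closedBall (c' 0) (R + 4 * b))
    (hbd' : projSet c (Set.range c') ⊆ closedBall (c 0) (R + 4 * b)) :
    Disjoint {x : Y | proj c x ⊆ c '' Ici (R + 6 * b)}
      {x : Y | proj c' x ⊆ c' '' Ici (R + 6 * b)} :=
  pingpong_sets_disjoint_general c c' hc hc' hne hne' b hb hcontr hcontr' R hbd hbd'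
end

section
/- Let (Y, d) be a metric space, c, c': ℝ → Y isometric embeddings such that the map (t, s) ↦ d(c(t), c'(s)) is proper (preimages of compacts are compact). Then the Hausdorff distance between c(ℝ) and c'(ℝ) is infinite: for every M > 0 there exists t ∈ ℝ with d(c(t), c'(ℝ)) > M. -/
open Set Metric

theorem exists_lt_infDist_range_of_isCompact_preimage_dist {X Z Y : Type*}
    [TopologicalSpace X] [NoncompactSpace X] [TopologicalSpace Z] [Nonempty Z]
    [PseudoMetricSpace Y] (f : X → Y) (g : Z → Y)
    (hproper : ∀ K : Set ℝ, IsCompact K → IsCompact {p : X × Z | dist (f p.1) (g p.2) ∈ K})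
    (M : ℝ) : ∃ x, M < infDist (f x) (range g) := by
  by_contra! hle
  have hcover : Prod.fst '' {p : X × Z | dist (f p.1) (g p.2) ∈ Icc 0 (M + 1)} = univ := by
    refine eq_univ_of_forall fun x => ?_
    obtain ⟨_, ⟨z, rfl⟩, hz⟩ :=
      (infDist_lt_iff (range_nonempty g)).1 ((hle x).trans_lt (lt_add_one M))
    exact ⟨(x, z), ⟨dist_nonneg, hz.le⟩, rfl⟩
  exact noncompact_univ X (hcover ▸ (hproper _ isCompact_Icc).image continuous_fst)

theorem hausdorff_distance_infinite_of_proper_general {Y : Type*} [MetricSpace Y]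
    (c c' : ℝ → Y)
    (hproper : ∀ K : Set ℝ, IsCompact K →
      IsCompact {p : ℝ × ℝ | dist (c p.1) (c' p.2) ∈ K}) :
    ∀ M > (0 : ℝ), ∃ t : ℝ, M < Metric.infDist (c t) (Set.range c') :=
  fun M _ => exists_lt_infDist_range_of_isCompact_preimage_dist c c' hproper M

/-- Corollary 3.5: if the joint distance function of two geodesic lines is proper, then
their Hausdorff distance is infinite: there are points of `c` arbitrarily far from `c'`. -/
theorem hausdorff_distance_infinite_of_proper {Y : Type*} [MetricSpace Y]
    (c c' : ℝ → Y) (hc : Isometry c) (hc' : Isometry c')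
    (hproper : ∀ K : Set ℝ, IsCompact K →
      IsCompact {p : ℝ × ℝ | dist (c p.1) (c' p.2) ∈ K}) :
    ∀ M > (0 : ℝ), ∃ t : ℝ, M < Metric.infDist (c t) (Set.range c') :=
  hausdorff_distance_infinite_of_proper_general c c' hproper
end
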